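/- arXiv:1108.3351 — 3 statements merged into one kernel-verified Lean document; each statement's English description precedes it below -/
import Mathlib

section
/- If θ : V(D₂) → V(D₁) is a compression map between reflexive directed graphs and D₁ is preordered (reflexive and transitive), then D₂ is preordered. -/
def Reflexive' {V : Type*} (A : V → V → Prop) : Prop := ∀ v, A v v

def Transitive' {V : Type*} (A : V → V → Prop) : Prop :=
  ∀ x y z, A x y → A y z → A x z

def Preordered {V : Type*} (A : V → V → Prop) : Prop :=
  Reflexive' A ∧ Transitive' A

def BalancedGraph {V : Type*} (A : V → V → Prop) : Prop :=
  ∀ w x y z, A w x → A x y → A y z → A w z → (A w y ↔ A x z)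

def Stable {V : Type*} (A : V → V → Prop) : Prop :=
  BalancedGraph A ∧ ∀ a b c d : V, a ≠ b → a ≠ c → a ≠ d → b ≠ c → b ≠ d → c ≠ d →
    A a b → A a c → A b c → A b d → A c d → A a d

def TransTriple {V : Type*} (A : V → V → Prop) (a b c : V) : Prop :=
  A a b ∧ A b c ∧ A a c

def IsClasp {V : Type*} (A : V → V → Prop) (x : V) : Prop :=
  ∃ w y, w ≠ x ∧ y ≠ x ∧ A w x ∧ A x y ∧ ¬ A w y

def IsLockedClasp {V : Type*} (A : V → V → Prop) (x : V) : Prop :=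
  ∃ u v w y, u ≠ x ∧ v ≠ x ∧ w ≠ x ∧ y ≠ x ∧
    TransTriple A u x y ∧ TransTriple A u x v ∧ TransTriple A w x v ∧ ¬ A w y

def Soloist {V : Type*} (A : V → V → Prop) (s : V) : Prop :=
  ∀ r, r ≠ s → ¬ (A r s ∧ A s r)

/-- A compression map between (reflexive) directed graphs, given by arrow
relations `A₂` on `V₂` and `A₁` on `V₁`: a surjection preserving arrows,
lifting transitive triples, and inducing a bijection between the arrows
between distinct vertices. -/
def IsCompression {V₂ V₁ : Type*} (A₂ : V₂ → V₂ → Prop) (A₁ : V₁ → V₁ → Prop)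
    (θ : V₂ → V₁) : Prop :=
  Function.Surjective θ ∧
  (∀ x y, A₂ x y → A₁ (θ x) (θ y)) ∧
  (∀ a b c, TransTriple A₁ a b c →
    ∃ x y z, TransTriple A₂ x y z ∧ θ x = a ∧ θ y = b ∧ θ z = c) ∧
  (∀ x y, x ≠ y → A₂ x y → θ x ≠ θ y) ∧
  (∀ x y x' y', x ≠ y → x' ≠ y' → A₂ x y → A₂ x' y' →
    θ x = θ x' → θ y = θ y' → x = x' ∧ y = y') ∧
  (∀ a b, a ≠ b → A₁ a b → ∃ x y, x ≠ y ∧ A₂ x y ∧ θ x = a ∧ θ y = b)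

/-! The images of two arrows `x → y → z` of `D₂` form a transitive triple of the preordered `D₁`,
which lifts to a transitive triple `x' → y' → z'` of `D₂`. An arrow between distinct vertices is
determined by its image, so `x' = x`, `z' = z`, and the lifted arrow `x' → z'` is `x → z`. -/

namespace IsCompression

variable {V₂ V₁ : Type*} {A₂ : V₂ → V₂ → Prop} {A₁ : V₁ → V₁ → Prop} {θ : V₂ → V₁}

theorem map_arrow (hθ : IsCompression A₂ A₁ θ) {x y : V₂} (h : A₂ x y) : A₁ (θ x) (θ y) :=
  hθ.2.1 x y h

theorem eq_of_map_eq_of_ne (hθ : IsCompression A₂ A₁ θ) {x y x' y' : V₂} (hne : x ≠ y)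
    (h : A₂ x y) (h' : A₂ x' y') (hx : θ x' = θ x) (hy : θ y' = θ y) : x' = x ∧ y' = y := by
  have hne' : x' ≠ y' := fun he => hθ.2.2.2.1 x y hne h (by rw [← hx, ← hy, he])
  exact hθ.2.2.2.2.1 x' y' x y hne' hne h' h hx hy

theorem transitive (hθ : IsCompression A₂ A₁ θ) (h₁ : Transitive' A₁) : Transitive' A₂ := by
  intro x y z hxy hyz
  rcases eq_or_ne x y with rfl | hne_xy
  · exact hyz
  rcases eq_or_ne y z with rfl | hne_yz
  · exact hxy
  have htri : TransTriple A₁ (θ x) (θ y) (θ z) :=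
    ⟨hθ.map_arrow hxy, hθ.map_arrow hyz, h₁ _ _ _ (hθ.map_arrow hxy) (hθ.map_arrow hyz)⟩
  obtain ⟨x', y', z', ⟨hx'y', hy'z', hx'z'⟩, hx, hy, hz⟩ := hθ.2.2.1 _ _ _ htri
  obtain ⟨rfl, -⟩ := hθ.eq_of_map_eq_of_ne hne_xy hxy hx'y' hx hy
  obtain ⟨-, rfl⟩ := hθ.eq_of_map_eq_of_ne hne_yz hyz hy'z' hy hz
  exact hx'z'

end IsCompression

theorem stmt1_general {V₂ V₁ : Type*} (A₂ : V₂ → V₂ → Prop) (A₁ : V₁ → V₁ → Prop)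
    (θ : V₂ → V₁) (h₂ : Reflexive' A₂)
    (hθ : IsCompression A₂ A₁ θ) (hpre : Preordered A₁) :
    Preordered A₂ :=
  ⟨h₂, hθ.transitive hpre.2⟩

theorem stmt1 {V₂ V₁ : Type*} (A₂ : V₂ → V₂ → Prop) (A₁ : V₁ → V₁ → Prop)
    (θ : V₂ → V₁) (h₂ : Reflexive' A₂) (h₁ : Reflexive' A₁)
    (hθ : IsCompression A₂ A₁ θ) (hpre : Preordered A₁) :
    Preordered A₂ :=
  stmt1_general A₂ A₁ θ h₂ hθ hpre
end

section
/- If θ : V(D₂) → V(D₁) is a compression map between reflexive directed graphs and D₁ is stable, then D₂ is stable. -/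
/-!
A compression map is injective on arrows between distinct vertices and lifts transitive
triples, so a path `u → v → w` of proper arrows in `D₂` whose endpoints map to an arrow of
`D₁` is already closed: the lifted transitive triple over `θ u, θ v, θ w` must use the very
arrows `u → v` and `v → w`, and its third arrow is `u → w`. Both the balance condition and the
stability condition conclude with an arrow that closes such a path, and their hypotheses are
transported to `D₁` by `θ`.
-/

namespace IsCompression

variable {V₂ V₁ : Type*} {A₂ : V₂ → V₂ → Prop} {A₁ : V₁ → V₁ → Prop} {θ : V₂ → V₁}

theorem exists_transTriple_lift (hθ : IsCompression A₂ A₁ θ) {a b c : V₁}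
    (h : TransTriple A₁ a b c) :
    ∃ x y z, TransTriple A₂ x y z ∧ θ x = a ∧ θ y = b ∧ θ z = c :=
  hθ.2.2.1 a b c h

theorem map_ne (hθ : IsCompression A₂ A₁ θ) {x y : V₂} (hxy : x ≠ y) (h : A₂ x y) :
    θ x ≠ θ y :=
  hθ.2.2.2.1 x y hxy h

theorem eq_of_arrow_of_map_eq (hθ : IsCompression A₂ A₁ θ) {u v u' v' : V₂} (huv : u ≠ v)
    (h : A₂ u v) (h' : A₂ u' v') (hu : θ u' = θ u) (hv : θ v' = θ v) : u' = u ∧ v' = v := by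
  have hu'v' : u' ≠ v' := by
    rintro rfl
    exact hθ.map_ne huv h (hu.symm.trans hv)
  exact hθ.2.2.2.2.1 u' v' u v hu'v' huv h' h hu hv

theorem arrow_of_map_arrow_of_ne (hθ : IsCompression A₂ A₁ θ) {u v w : V₂} (huv : u ≠ v)
    (hvw : v ≠ w) (h₁ : A₂ u v) (h₂ : A₂ v w) (h : A₁ (θ u) (θ w)) : A₂ u w := by
  obtain ⟨p, q, r, ⟨hpq, hqr, hpr⟩, hp, hq, hr⟩ :=
    hθ.exists_transTriple_lift ⟨hθ.map_arrow h₁, hθ.map_arrow h₂, h⟩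
  obtain ⟨rfl, rfl⟩ := hθ.eq_of_arrow_of_map_eq huv h₁ hpq hp hq
  obtain ⟨-, rfl⟩ := hθ.eq_of_arrow_of_map_eq hvw h₂ hqr rfl hr
  exact hpr

theorem arrow_of_map_arrow (hθ : IsCompression A₂ A₁ θ) {u v w : V₂} (h₁ : A₂ u v)
    (h₂ : A₂ v w) (h : A₁ (θ u) (θ w)) : A₂ u w := by
  by_cases huv : u = v
  · exact huv ▸ h₂
  by_cases hvw : v = w
  · exact hvw ▸ h₁
  exact hθ.arrow_of_map_arrow_of_ne huv hvw h₁ h₂ h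

theorem balancedGraph (hθ : IsCompression A₂ A₁ θ) (hbal : BalancedGraph A₁) :
    BalancedGraph A₂ := by
  intro w x y z hwx hxy hyz hwz
  have hbal₁ := hbal _ _ _ _ (hθ.map_arrow hwx) (hθ.map_arrow hxy) (hθ.map_arrow hyz)
    (hθ.map_arrow hwz)
  exact ⟨fun hwy ↦ hθ.arrow_of_map_arrow hxy hyz (hbal₁.1 (hθ.map_arrow hwy)),
    fun hxz ↦ hθ.arrow_of_map_arrow hwx hxy (hbal₁.2 (hθ.map_arrow hxz))⟩

end IsCompression

theorem stmt3_general {V₂ V₁ : Type*} (A₂ : V₂ → V₂ → Prop) (A₁ : V₁ → V₁ → Prop)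
    (θ : V₂ → V₁) (h₂ : Reflexive' A₂)
    (hθ : IsCompression A₂ A₁ θ) (hs : Stable A₁) :
    Stable A₂ := by
  refine ⟨hθ.balancedGraph hs.1, ?_⟩
  intro a b c d hab hac had hbc hbd hcd hAab hAac hAbc hAbd hAcd
  have had₁ : A₁ (θ a) (θ d) := by
    by_cases h : θ a = θ d
    · exact h ▸ hθ.map_arrow (h₂ a)
    · exact hs.2 _ _ _ _ (hθ.map_ne hab hAab) (hθ.map_ne hac hAac) h (hθ.map_ne hbc hAbc)
        (hθ.map_ne hbd hAbd) (hθ.map_ne hcd hAcd) (hθ.map_arrow hAab) (hθ.map_arrow hAac)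
        (hθ.map_arrow hAbc) (hθ.map_arrow hAbd) (hθ.map_arrow hAcd)
  exact hθ.arrow_of_map_arrow_of_ne hab hbd hAab hAbd had₁

theorem stmt3 {V₂ V₁ : Type*} (A₂ : V₂ → V₂ → Prop) (A₁ : V₁ → V₁ → Prop)
    (θ : V₂ → V₁) (h₂ : Reflexive' A₂) (h₁ : Reflexive' A₁)
    (hθ : IsCompression A₂ A₁ θ) (hs : Stable A₁) :
    Stable A₂ :=
  stmt3_general A₂ A₁ θ h₂ hθ hs
end

section
/- Let D be a stable reflexive directed graph, s a soloist, and suppose (a, b, s) is a transitive triple with a, b ∈ V(D)∖{s}, a ≠ b. If xa ∈ A(D) for some vertex x, then xs ∈ A(D) if and only if xb ∈ A(D). -/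
theorem BalancedGraph.arrow_of_transTriple {V : Type*} {A : V → V → Prop}
    (hbal : BalancedGraph A) {x a b s : V} (ht : TransTriple A a b s)
    (hxa : A x a) (hxs : A x s) : A x b :=
  (hbal x a b s hxa ht.1 ht.2.1 hxs).mpr ht.2.2

theorem Stable.arrow_of_transTriple_of_soloist {V : Type*} {A : V → V → Prop}
    (hs : Stable A) {x a b s : V} (hsol : Soloist A s) (ha : a ≠ s) (hb : b ≠ s)
    (hab : a ≠ b) (ht : TransTriple A a b s) (hxa : A x a) (hxb : A x b) : A x s := by
  obtain ⟨hAab, hAbs, hAas⟩ := ht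
  rcases eq_or_ne x s with rfl | hxs
  · exact absurd ⟨hAas, hxa⟩ (hsol a ha)
  rcases eq_or_ne x a with rfl | hxa'
  · exact hAas
  rcases eq_or_ne x b with rfl | hxb'
  · exact hAbs
  exact hs.2 x a b s hxa' hxb' hxs hab ha hb hxa hxb hAab hAas hAbs

theorem stmt6_general {V : Type*} (A : V → V → Prop)
    (hs : Stable A) (s : V) (hsol : Soloist A s)
    (a b : V) (ha : a ≠ s) (hb : b ≠ s) (hab : a ≠ b)
    (ht : TransTriple A a b s) (x : V) (hxa : A x a) :
    A x s ↔ A x b :=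
  ⟨hs.1.arrow_of_transTriple ht hxa,
    hs.arrow_of_transTriple_of_soloist hsol ha hb hab ht hxa⟩

theorem stmt6 {V : Type*} (A : V → V → Prop) (hr : Reflexive' A)
    (hs : Stable A) (s : V) (hsol : Soloist A s)
    (a b : V) (ha : a ≠ s) (hb : b ≠ s) (hab : a ≠ b)
    (ht : TransTriple A a b s) (x : V) (hxa : A x a) :
    A x s ↔ A x b :=
  stmt6_general A hs s hsol a b ha hb hab ht x hxa
end
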